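/- Let R be a commutative Noetherian ring of Krull dimension d and let (a_0, a_1, …, a_n) be a unimodular row over R with n > d. Then the row is reducible: there exist elements making (a_0,…,a_n) equivalent (under elementary transformations) to (1, 0, …, 0). -/

import Mathlib

/-!
Write `x = a 0`. One chooses the `t j` one entry at a time so that every prime containing the
first `k` modified entries `a j + x * t j` but not `x` has height at least `k`: the next entry
is moved within its coset modulo `x` out of the finitely many minimal primes of the previous
ideal that miss `x`, so every prime over the enlarged ideal strictly contains one of them.
Once there are more than `dim R` entries, a maximal ideal containing all of them must contain
`x`, hence the whole unimodular row; so the modified entries generate `R`. Transvections then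
add `1 - x`, written as a combination of those entries, to the first entry, and use the
resulting pivot `1` to clear the others.
-/

open Function Matrix

namespace Ideal

variable {R : Type*} [CommRing R]

theorem exists_notMem_forall_mem_of_isAntichain {S : Finset (Ideal R)}
    (hS : IsAntichain (· ≤ ·) (S : Set (Ideal R))) {q : Ideal R} [q.IsPrime] (hq : q ∈ S) :
    ∃ y ∉ q, ∀ q' ∈ S, q' ≠ q → y ∈ q' := by
  classical
  have hprod : ¬ ∏ q' ∈ S.erase q, q' ≤ q := by
    rw [IsPrime.prod_le ‹_›]
    rintro ⟨q', hq', hle⟩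
    exact hS (Finset.mem_of_mem_erase hq') hq (Finset.ne_of_mem_erase hq') hle
  obtain ⟨y, hy, hyq⟩ := Set.not_subset.mp hprod
  exact ⟨y, hyq, fun q' hq' hne =>
    prod_le_inf.trans (Finset.inf_le (Finset.mem_erase.mpr ⟨hne, hq'⟩)) hy⟩

theorem exists_add_mul_notMem_of_isAntichain {S : Finset (Ideal R)}
    (hprime : ∀ q ∈ S, q.IsPrime) (hS : IsAntichain (· ≤ ·) (S : Set (Ideal R)))
    (a x : R) (hx : ∀ q ∈ S, x ∉ q) : ∃ u, ∀ q ∈ S, a + x * u ∉ q := by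
  classical
  choose! y hyq hy using fun q (hq : q ∈ S) =>
    haveI := hprime q hq
    exists_notMem_forall_mem_of_isAntichain hS hq
  -- Modulo a prime `q ∋ a` the sum below is `y q`; modulo any other prime of `S` it is `0`.
  refine ⟨∑ q' ∈ S.filter (a ∈ ·), y q', fun q hq => ?_⟩
  have := hprime q hq
  have hrest : ∑ q' ∈ (S.filter (a ∈ ·)).erase q, y q' ∈ q :=
    q.sum_mem fun q' hq' => hy q' (Finset.mem_filter.mp (Finset.mem_of_mem_erase hq')).1 q hq
      (Finset.ne_of_mem_erase hq').symm
  by_cases ha : a ∈ q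
  · rw [← Finset.add_sum_erase _ _ (Finset.mem_filter.mpr ⟨hq, ha⟩), mul_add, ← add_assoc,
      Ideal.add_mem_iff_left _ (mul_mem_left _ _ hrest), Ideal.add_mem_iff_right _ ha]
    exact IsPrime.mul_notMem ‹_› (hx q hq) (hyq q hq)
  · have hq' : q ∉ S.filter (a ∈ ·) := fun h => ha (Finset.mem_filter.mp h).2
    rw [Finset.erase_eq_of_notMem hq'] at hrest
    rwa [Ideal.add_mem_iff_left _ (mul_mem_left _ _ hrest)]

end Ideal

section StableRange

open Ideal

variable {R ι : Type*} [CommRing R] [IsNoetherianRing R] [DecidableEq ι]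

theorem exists_le_height_of_span_add_mul_le (a : ι → R) (x : R) (s : Finset ι) :
    ∃ t : ι → R, (∀ j ∉ s, t j = 0) ∧ ∀ q : Ideal R, q.IsPrime → x ∉ q →
      span ((fun j => a j + x * t j) '' s) ≤ q → (s.card : ℕ∞) ≤ q.height := by
  induction s using Finset.induction_on with
  | empty => exact ⟨0, fun _ _ => rfl, fun _ _ _ _ => by simp⟩
  | @insert j s hj ih =>
    obtain ⟨t, ht0, ht⟩ := ih
    set I := span ((fun j => a j + x * t j) '' s)
    have hfin : {q ∈ I.minimalPrimes | x ∉ q}.Finite :=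
      I.finite_minimalPrimes_of_isNoetherianRing.subset fun _ hq => hq.1
    obtain ⟨u, hu⟩ := exists_add_mul_notMem_of_isAntichain (S := hfin.toFinset)
      (fun q hq => ((Set.Finite.mem_toFinset _).mp hq).1.isPrime)
      ((setOfPred_minimal_antichain _).subset fun q hq => ((Set.Finite.mem_toFinset _).mp hq).1)
      (a j) x (fun q hq => ((Set.Finite.mem_toFinset _).mp hq).2)
    refine ⟨update t j u, fun k hk => ?_, fun q hq hxq hle => ?_⟩
    · rw [Finset.mem_insert, not_or] at hk
      rw [update_of_ne hk.1, ht0 k hk.2]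
    have himage : (fun k => a k + x * update t j u k) '' ↑(insert j s) =
        insert (a j + x * u) ((fun k => a k + x * t k) '' s) := by
      rw [Finset.coe_insert, Set.image_insert_eq, update_self]
      congr 1
      exact Set.image_congr fun k hk => by rw [update_of_ne (ne_of_mem_of_not_mem hk hj)]
    rw [himage, span_insert, sup_le_iff, span_singleton_le_iff_mem] at hle
    obtain ⟨q₀, hq₀, hq₀q⟩ := exists_minimalPrimes_le hle.2
    have := hq₀.isPrime
    have hxq₀ : x ∉ q₀ := fun h => hxq (hq₀q h)
    have hlt : q₀ < q := lt_of_le_of_ne hq₀q fun h =>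
      hu q₀ ((Set.Finite.mem_toFinset _).mpr ⟨hq₀, hxq₀⟩) (h ▸ hle.1)
    calc ((insert j s).card : ℕ∞) = s.card + 1 := by rw [Finset.card_insert_of_notMem hj]; simp
      _ ≤ q₀.height + 1 := by gcongr; exact ht q₀ this hxq₀ hq₀.1.2
      _ ≤ q.height := height_add_one_le_of_lt_of_isPrime hlt

theorem exists_span_add_mul_eq_top (a : ι → R) (x : R) (s : Finset ι)
    (hunit : span (insert x (a '' s)) = ⊤) (hdim : ringKrullDim R < s.card) :
    ∃ t : ι → R, (∀ j ∉ s, t j = 0) ∧ span ((fun j => a j + x * t j) '' s) = ⊤ := by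
  obtain ⟨t, ht0, ht⟩ := exists_le_height_of_span_add_mul_le a x s
  refine ⟨t, ht0, by_contra fun hne => ?_⟩
  obtain ⟨M, hM, hle⟩ := exists_le_maximal _ hne
  by_cases hxM : x ∈ M
  · refine hM.ne_top (top_le_iff.mp (hunit ▸ span_le.mpr ?_))
    rintro _ (rfl | ⟨j, hj, rfl⟩)
    · exact hxM
    · have := hle (subset_span ⟨j, hj, rfl⟩)
      simpa using M.sub_mem this (M.mul_mem_right (t j) hxM)
  · have := (WithBot.coe_le_coe.mpr (ht M hM.isPrime hxM hle)).trans
      (height_le_ringKrullDim_of_isPrime (I := M))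
    exact (this.trans_lt hdim).false

end StableRange

section Transvection

variable {R ι : Type*} [CommRing R] [Fintype ι] [DecidableEq ι]

theorem Matrix.vecMul_transvection (b : ι → R) (i j : ι) (c : R) :
    vecMul b (transvection i j c) = update b j (b j + b i * c) := by
  rw [transvection, vecMul_add, vecMul_one]
  ext k
  rcases eq_or_ne k j with rfl | hk
  · simp [vecMul, dotProduct, single_apply]
  · simp [vecMul, dotProduct, hk, hk.symm]

def TransvectionStep (a b : ι → R) : Prop :=
  ∃ i j : ι, ∃ c : R, i ≠ j ∧ b = vecMul a (transvection i j c)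

abbrev TransvectionReachable : (ι → R) → (ι → R) → Prop :=
  Relation.ReflTransGen TransvectionStep

namespace TransvectionReachable

theorem exists_list_prod {a b : ι → R} (h : TransvectionReachable a b) :
    ∃ L : List (Matrix ι ι R),
      (∀ B ∈ L, ∃ (i j : ι) (c : R), i ≠ j ∧ B = transvection i j c) ∧ vecMul a L.prod = b := by
  induction h with
  | refl => exact ⟨[], by simp, by simp⟩
  | tail _ hstep ih =>
    obtain ⟨L, hL, rfl⟩ := ih
    obtain ⟨i, j, c, hij, rfl⟩ := hstep
    refine ⟨L ++ [transvection i j c], fun B hB => ?_, by simp [vecMul_vecMul]⟩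
    rcases List.mem_append.mp hB with hB | hB
    exacts [hL B hB, ⟨i, j, c, hij, List.mem_singleton.mp hB⟩]

theorem update_add_mul (b : ι → R) {i j : ι} (hij : i ≠ j) (c : R) :
    TransvectionReachable b (update b j (b j + b i * c)) :=
  .single ⟨i, j, c, hij, (vecMul_transvection b i j c).symm⟩

theorem add_mul_pivot (b : ι → R) (i : ι) (t : ι → R) (ht : t i = 0) :
    TransvectionReachable b (fun k => b k + b i * t k) := by
  suffices ∀ s : Finset ι,
      TransvectionReachable b (fun k => if k ∈ s then b k + b i * t k else b k) by
    simpa using this Finset.univ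
  intro s
  induction s using Finset.induction_on with
  | empty => simpa using .refl
  | @insert j s hj ih =>
    rcases eq_or_ne i j with rfl | hij
    · convert ih using 2 with k
      rcases eq_or_ne k i with rfl | hk
      · simp [ht]
      · simp [hk]
    refine ih.trans ?_
    convert update_add_mul _ hij (t j) using 1
    ext k
    rcases eq_or_ne k j with rfl | hk
    · simp [hj, ht]
    · simp [hk, ht]

theorem update_add_of_mem_span {b : ι → R} {i : ι} {x : R}
    (hx : x ∈ Ideal.span (b '' {i}ᶜ)) : TransvectionReachable b (update b i (b i + x)) := by
  -- The span does not see the `i`-th entry, so the claim can be proved for every row that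
  -- agrees with `b` away from `i`; this makes it stable under sums, and the factor `r` makes it
  -- stable under scalar multiples.
  suffices ∀ r b', (∀ j ≠ i, b' j = b j) →
      TransvectionReachable b' (update b' i (b' i + r * x)) by
    simpa using this 1 b fun _ _ => rfl
  induction hx using Submodule.span_induction with
  | mem _ hy =>
    obtain ⟨j, hj, rfl⟩ := hy
    intro r b' hb'
    simpa [hb' j hj, mul_comm] using update_add_mul b' hj r
  | zero => simpa using fun _ _ => .refl
  | add y z _ _ hy hz =>
    intro r b' hb'
    refine (hy r b' hb').trans ?_
    convert hz r (update b' i (b' i + r * y))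
      (fun j hj => by rw [update_of_ne hj, hb' j hj]) using 1
    simp [mul_add, add_assoc]
  | smul c y _ hy =>
    intro r b' hb'
    simpa [mul_assoc] using hy (r * c) b' hb'

theorem single_of_span_eq_top {b : ι → R} {i : ι} (hb : Ideal.span (b '' {i}ᶜ) = ⊤) :
    TransvectionReachable b (Pi.single i 1) := by
  have hpivot := update_add_of_mem_span (hb ▸ Submodule.mem_top : 1 - b i ∈ _)
  rw [add_sub_cancel] at hpivot
  refine hpivot.trans ?_
  convert add_mul_pivot _ i (-update b i 0) (by simp) using 1
  ext k
  rcases eq_or_ne k i with rfl | hk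
  · simp
  · simp [hk]

end TransvectionReachable

end Transvection

/-- Bass's stable range theorem: over a commutative Noetherian ring R of Krull
dimension d, every unimodular row (a_0,…,a_n) of length n+1 with n > d can be transformed by
elementary transformations (products of elementary/transvection matrices) into the standard
row (1,0,…,0). -/
theorem bass_stable_range (R : Type*) [CommRing R] [IsNoetherianRing R] (d n : ℕ)
    (hdim : ringKrullDim R = d) (hn : d < n)
    (a : Fin (n + 1) → R) (ha : ∃ b : Fin (n + 1) → R, ∑ i, a i * b i = 1) :
    ∃ L : List (Matrix (Fin (n + 1)) (Fin (n + 1)) R),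
      (∀ B ∈ L, ∃ (i j : Fin (n + 1)) (c : R), i ≠ j ∧ B = Matrix.transvection i j c) ∧
      Matrix.vecMul a L.prod = Pi.single 0 1 := by
  have hunit : Ideal.span (insert (a 0) (a '' ↑({0}ᶜ : Finset (Fin (n + 1))))) = ⊤ := by
    obtain ⟨b, hb⟩ := ha
    rw [Finset.coe_compl, Finset.coe_singleton, Set.insert_image_compl_eq_range,
      Ideal.eq_top_iff_one]
    exact Ideal.mem_span_range_iff_exists_fun.mpr ⟨b, by simpa [mul_comm] using hb⟩
  have hcard : ringKrullDim R < ({0}ᶜ : Finset (Fin (n + 1))).card := by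
    rw [Finset.card_compl, hdim]
    simpa using hn
  obtain ⟨t, ht0, ht⟩ := exists_span_add_mul_eq_top a (a 0) {0}ᶜ hunit hcard
  rw [Finset.coe_compl, Finset.coe_singleton] at ht
  have hreach : TransvectionReachable a (Pi.single 0 1) :=
    (TransvectionReachable.add_mul_pivot a 0 t (ht0 0 (by simp))).trans
      (TransvectionReachable.single_of_span_eq_top ht)
  exact hreach.exists_list_prod
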